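/- In the final step of the completeness proof, square (1a) is a pushout in symbolic graphs: suppose (2a) is an initial pushout in symbolic graphs, (1a) is a pushout in E-graphs, SY₁ = (Y₁, Φ_{Y₁}) with Φ_{Y₁} := Φ_{P₁} ∧ co'₂_Φ(Φ₂) is the result of a narrowing direct derivation SP₁ ⇛_{r₂,o₂'} SY₁, there exists a symbolic direct derivation SH₁ ⇒_{r₂,m₂'} SX₁ with symbolic comatch cm'₂ and Φ_{H₁} ⇔ Φ_{X₁}, g : SP₁ → SH₁ is a symbolic graph morphism with g_Φ = p_Φ (p : Y₁ → X₁ the E-graph morphism of (1a)) and p_Φ ∘ co'₂_Φ = cm'₂_Φ, and c₁, c'₁ are M-morphisms with c'₁_Φ(c₁_Φ(Φ_C)) ⇔ Φ_{X₁}. Then D ⊨ Φ_{X₁} ⇔ p_Φ(Φ_{Y₁}) ∧ c'₁_Φ(c₁_Φ(Φ_C)), i.e., (1a) is a pushout in symbolic graphs. -/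
import Mathlib

namespace SGT

/-- An E-graph: a graph together with label nodes and node/edge-labeling edges. -/
structure EGraph (N E V LN LE : Type*) where
  nodes : Set N
  edges : Set E
  lnodes : Set V
  nlEdges : Set LN
  elEdges : Set LE
  src : E → N
  tgt : E → N
  nlSrc : LN → N
  nlTgt : LN → V
  elSrc : LE → E
  elTgt : LE → V
  src_mem : ∀ e ∈ edges, src e ∈ nodes
  tgt_mem : ∀ e ∈ edges, tgt e ∈ nodes
  nlSrc_mem : ∀ e ∈ nlEdges, nlSrc e ∈ nodes
  nlTgt_mem : ∀ e ∈ nlEdges, nlTgt e ∈ lnodes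
  elSrc_mem : ∀ e ∈ elEdges, elSrc e ∈ edges
  elTgt_mem : ∀ e ∈ elEdges, elTgt e ∈ lnodes

variable {N E V LN LE D : Type*}

/-- An E-graph morphism: component functions commuting with all source/target functions. -/
structure EGraphHom (G H : EGraph N E V LN LE) where
  fV : N → N
  fE : E → E
  fD : V → V
  fNL : LN → LN
  fEL : LE → LE
  mapsV : ∀ v ∈ G.nodes, fV v ∈ H.nodes
  mapsE : ∀ e ∈ G.edges, fE e ∈ H.edges
  mapsD : ∀ x ∈ G.lnodes, fD x ∈ H.lnodes
  mapsNL : ∀ e ∈ G.nlEdges, fNL e ∈ H.nlEdges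
  mapsEL : ∀ e ∈ G.elEdges, fEL e ∈ H.elEdges
  commSrc : ∀ e ∈ G.edges, fV (G.src e) = H.src (fE e)
  commTgt : ∀ e ∈ G.edges, fV (G.tgt e) = H.tgt (fE e)
  commNlSrc : ∀ e ∈ G.nlEdges, fV (G.nlSrc e) = H.nlSrc (fNL e)
  commNlTgt : ∀ e ∈ G.nlEdges, fD (G.nlTgt e) = H.nlTgt (fNL e)
  commElSrc : ∀ e ∈ G.elEdges, fE (G.elSrc e) = H.elSrc (fEL e)
  commElTgt : ∀ e ∈ G.elEdges, fD (G.elTgt e) = H.elTgt (fEL e)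

/-- Composition of E-graph morphisms. -/
def EGraphHom.comp {G H K : EGraph N E V LN LE} (g : EGraphHom H K) (f : EGraphHom G H) :
    EGraphHom G K where
  fV := fun v => g.fV (f.fV v)
  fE := fun e => g.fE (f.fE e)
  fD := fun x => g.fD (f.fD x)
  fNL := fun e => g.fNL (f.fNL e)
  fEL := fun e => g.fEL (f.fEL e)
  mapsV := fun v hv => g.mapsV _ (f.mapsV v hv)
  mapsE := fun e he => g.mapsE _ (f.mapsE e he)
  mapsD := fun x hx => g.mapsD _ (f.mapsD x hx)
  mapsNL := fun e he => g.mapsNL _ (f.mapsNL e he)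
  mapsEL := fun e he => g.mapsEL _ (f.mapsEL e he)
  commSrc := fun e he => by beta_reduce; rw [f.commSrc e he, g.commSrc _ (f.mapsE e he)]
  commTgt := fun e he => by beta_reduce; rw [f.commTgt e he, g.commTgt _ (f.mapsE e he)]
  commNlSrc := fun e he => by beta_reduce; rw [f.commNlSrc e he, g.commNlSrc _ (f.mapsNL e he)]
  commNlTgt := fun e he => by beta_reduce; rw [f.commNlTgt e he, g.commNlTgt _ (f.mapsNL e he)]
  commElSrc := fun e he => by beta_reduce; rw [f.commElSrc e he, g.commElSrc _ (f.mapsEL e he)]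
  commElTgt := fun e he => by beta_reduce; rw [f.commElTgt e he, g.commElTgt _ (f.mapsEL e he)]

/-- Two parallel E-graph morphisms agree on all carriers (equality of morphisms). -/
def EGraphHom.EqOn {G H : EGraph N E V LN LE} (f g : EGraphHom G H) : Prop :=
  (∀ v ∈ G.nodes, f.fV v = g.fV v) ∧ (∀ e ∈ G.edges, f.fE e = g.fE e) ∧
  (∀ x ∈ G.lnodes, f.fD x = g.fD x) ∧ (∀ e ∈ G.nlEdges, f.fNL e = g.fNL e) ∧
  (∀ e ∈ G.elEdges, f.fEL e = g.fEL e)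

/-- Monomorphism: all components injective on the carriers. -/
def EGraphHom.Mono {G H : EGraph N E V LN LE} (f : EGraphHom G H) : Prop :=
  Set.InjOn f.fV G.nodes ∧ Set.InjOn f.fE G.edges ∧ Set.InjOn f.fD G.lnodes ∧
  Set.InjOn f.fNL G.nlEdges ∧ Set.InjOn f.fEL G.elEdges

/-- Class M morphisms: injective for graph nodes and all kinds of edges and
bijective for label nodes. -/
def EGraphHom.MClass {G H : EGraph N E V LN LE} (f : EGraphHom G H) : Prop :=
  Set.InjOn f.fV G.nodes ∧ Set.InjOn f.fE G.edges ∧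
  Set.BijOn f.fD G.lnodes H.lnodes ∧
  Set.InjOn f.fNL G.nlEdges ∧ Set.InjOn f.fEL G.elEdges

/-- Injective for all kinds of nodes and edges except the label nodes (match condition). -/
def EGraphHom.InjExceptLabels {G H : EGraph N E V LN LE} (f : EGraphHom G H) : Prop :=
  Set.InjOn f.fV G.nodes ∧ Set.InjOn f.fE G.edges ∧
  Set.InjOn f.fNL G.nlEdges ∧ Set.InjOn f.fEL G.elEdges

/-- Isomorphism: all components bijective between the carriers. -/
def EGraphHom.Iso {G H : EGraph N E V LN LE} (f : EGraphHom G H) : Prop :=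
  Set.BijOn f.fV G.nodes H.nodes ∧ Set.BijOn f.fE G.edges H.edges ∧
  Set.BijOn f.fD G.lnodes H.lnodes ∧ Set.BijOn f.fNL G.nlEdges H.nlEdges ∧
  Set.BijOn f.fEL G.elEdges H.elEdges

/-- Joint surjectivity of two morphisms into a common codomain: every element of the
codomain has a pre-image under one of the two morphisms (minimality of a context). -/
def JointlyOnto {L₁ L₂ K : EGraph N E V LN LE}
    (o₁ : EGraphHom L₁ K) (o₂ : EGraphHom L₂ K) : Prop :=
  (∀ v ∈ K.nodes, (∃ a ∈ L₁.nodes, o₁.fV a = v) ∨ (∃ a ∈ L₂.nodes, o₂.fV a = v)) ∧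
  (∀ e ∈ K.edges, (∃ a ∈ L₁.edges, o₁.fE a = e) ∨ (∃ a ∈ L₂.edges, o₂.fE a = e)) ∧
  (∀ x ∈ K.lnodes, (∃ a ∈ L₁.lnodes, o₁.fD a = x) ∨ (∃ a ∈ L₂.lnodes, o₂.fD a = x)) ∧
  (∀ e ∈ K.nlEdges, (∃ a ∈ L₁.nlEdges, o₁.fNL a = e) ∨ (∃ a ∈ L₂.nlEdges, o₂.fNL a = e)) ∧
  (∀ e ∈ K.elEdges, (∃ a ∈ L₁.elEdges, o₁.fEL a = e) ∨ (∃ a ∈ L₂.elEdges, o₂.fEL a = e))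

/-- Pushout of E-graphs, expressed by its universal property (up to agreement on carriers). -/
structure IsEGraphPushout {A B C P : EGraph N E V LN LE}
    (f : EGraphHom A B) (g : EGraphHom A C)
    (inB : EGraphHom B P) (inC : EGraphHom C P) : Prop where
  comm : (inB.comp f).EqOn (inC.comp g)
  desc : ∀ (Q : EGraph N E V LN LE) (u : EGraphHom B Q) (v : EGraphHom C Q),
    (u.comp f).EqOn (v.comp g) →
    ∃ w : EGraphHom P Q, (w.comp inB).EqOn u ∧ (w.comp inC).EqOn v
  uniq : ∀ (Q : EGraph N E V LN LE) (w w' : EGraphHom P Q),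
    (w.comp inB).EqOn (w'.comp inB) → (w.comp inC).EqOn (w'.comp inC) → w.EqOn w'

/-- Pullback of E-graphs, expressed by its universal property (up to agreement on carriers). -/
structure IsEGraphPullback {A B C P : EGraph N E V LN LE}
    (z₁ : EGraphHom A B) (z₂ : EGraphHom A C)
    (f : EGraphHom B P) (g : EGraphHom C P) : Prop where
  comm : (f.comp z₁).EqOn (g.comp z₂)
  lift : ∀ (Q : EGraph N E V LN LE) (u : EGraphHom Q B) (v : EGraphHom Q C),
    (f.comp u).EqOn (g.comp v) →
    ∃ w : EGraphHom Q A, (z₁.comp w).EqOn u ∧ (z₂.comp w).EqOn v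
  uniq : ∀ (Q : EGraph N E V LN LE) (w w' : EGraphHom Q A),
    (z₁.comp w).EqOn (z₁.comp w') → (z₂.comp w).EqOn (z₂.comp w') → w.EqOn w'

/-- A (semantically represented) first-order formula over the data algebra `D` has the
label nodes in `X` as its free variables: it only depends on the values of those variables. -/
def Respects (X : Set V) (φ : (V → D) → Prop) : Prop :=
  ∀ σ τ : V → D, (∀ x ∈ X, σ x = τ x) → φ σ → φ τ

/-- A symbolic graph: an E-graph together with a first-order formula (represented
semantically as the set of its satisfying assignments) over the label nodes. -/
structure SymbGraph (N E V LN LE D : Type*) where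
  eg : EGraph N E V LN LE
  phi : (V → D) → Prop
  respects : Respects eg.lnodes phi

/-- `h` is a symbolic graph morphism w.r.t. the formulas `φG` (on the source) and `φH`
(on the target): `D ⊨ Φ_H ⇒ h_Φ(Φ_G)`. -/
def IsSymbHom {G H : EGraph N E V LN LE} (φG φH : (V → D) → Prop)
    (h : EGraphHom G H) : Prop :=
  ∀ σ : V → D, φH σ → φG (fun x => σ (h.fD x))

/-- Two symbolic graphs are isomorphic: an E-graph isomorphism `h` with
`D ⊨ h_Φ(Φ_G) ⇔ Φ_H`. -/
def SymbIso (SG SH : SymbGraph N E V LN LE D) : Prop :=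
  ∃ h : EGraphHom SG.eg SH.eg, h.Iso ∧ ∀ σ : V → D, SH.phi σ ↔ SG.phi (fun x => σ (h.fD x))

/-- A grounded symbolic graph: for each value `v` of the data algebra it contains a
constant label node `c v`, and every satisfying assignment sends `c v` to `v`. -/
def Grounded (SG : SymbGraph N E V LN LE D) : Prop :=
  ∃ c : D → V, (∀ v : D, c v ∈ SG.eg.lnodes) ∧
    ∀ σ : V → D, SG.phi σ → ∀ v : D, σ (c v) = v

/-- Pushout in symbolic graphs: pushout of the underlying E-graphs whose pushout-object
formula is equivalent to the conjunction of the translated formulas of the two given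
objects. -/
structure IsSymbPushout {A B C P : EGraph N E V LN LE}
    (φB φC φP : (V → D) → Prop)
    (f : EGraphHom A B) (g : EGraphHom A C)
    (inB : EGraphHom B P) (inC : EGraphHom C P) : Prop where
  epo : IsEGraphPushout f g inB inC
  formula : ∀ σ : V → D,
    φP σ ↔ (φB (fun x => σ (inB.fD x)) ∧ φC (fun x => σ (inC.fD x)))

/-- Pullback in symbolic graphs: pullback of the underlying E-graphs whose pullback-object
formula is the disjunction of the (inverse-image translated) formulas of the two given
objects. -/
structure IsSymbPullback {A B C P : EGraph N E V LN LE}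
    (φA φB φC : (V → D) → Prop)
    (z₁ : EGraphHom A B) (z₂ : EGraphHom A C)
    (f : EGraphHom B P) (g : EGraphHom C P) : Prop where
  epb : IsEGraphPullback z₁ z₂ f g
  formula : ∀ σ : V → D, φA σ ↔
    ((∃ τ : V → D, φB τ ∧ ∀ x ∈ A.lnodes, σ x = τ (z₁.fD x)) ∨
     (∃ τ : V → D, φC τ ∧ ∀ x ∈ A.lnodes, σ x = τ (z₂.fD x)))

/-- A symbolic graph transformation rule `(L ←l− K −r→ R, Φ)`: the E-graphs `L`, `K`, `R`
share the same set of label nodes and the same formula `Φ`, and `l`, `r` are of class `M`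
(injective on graph nodes and all kinds of edges and bijective—in fact the identity—on the
shared label nodes). -/
structure SymbRule (N E V LN LE D : Type*) where
  L : EGraph N E V LN LE
  K : EGraph N E V LN LE
  R : EGraph N E V LN LE
  phi : (V → D) → Prop
  l : EGraphHom K L
  r : EGraphHom K R
  lnodesL : L.lnodes = K.lnodes
  lnodesR : R.lnodes = K.lnodes
  lD_id : ∀ x ∈ K.lnodes, l.fD x = x
  rD_id : ∀ x ∈ K.lnodes, r.fD x = x
  lM : l.MClass
  rM : r.MClass
  respects : Respects K.lnodes phi

/-- A symbolic direct derivation `SG ⇒_{ru,m} SH`: a double pushout in symbolic graphs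
at a symbolic match `m` that is injective for all kinds of nodes and edges except for the
label nodes; all morphisms of the diagram are symbolic graph morphisms. -/
structure SymbDerivation (ru : SymbRule N E V LN LE D)
    (SG SH : SymbGraph N E V LN LE D) where
  SD : SymbGraph N E V LN LE D
  m : EGraphHom ru.L SG.eg
  k : EGraphHom ru.K SD.eg
  g : EGraphHom SD.eg SG.eg
  f : EGraphHom SD.eg SH.eg
  cm : EGraphHom ru.R SH.eg
  m_inj : m.InjExceptLabels
  m_symb : IsSymbHom ru.phi SG.phi m
  k_symb : IsSymbHom ru.phi SD.phi k
  g_symb : IsSymbHom SD.phi SG.phi g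
  f_symb : IsSymbHom SD.phi SH.phi f
  cm_symb : IsSymbHom ru.phi SH.phi cm
  po1 : IsSymbPushout ru.phi SD.phi SG.phi ru.l k m g
  po2 : IsSymbPushout ru.phi SD.phi SH.phi ru.r k cm f

/-- A DPO diagram in E-graphs for a symbolic rule (underlying a narrowing derivation). -/
structure EGraphDerivation (ru : SymbRule N E V LN LE D)
    (G H : EGraph N E V LN LE) where
  Dg : EGraph N E V LN LE
  m : EGraphHom ru.L G
  k : EGraphHom ru.K Dg
  g : EGraphHom Dg G
  f : EGraphHom Dg H
  cm : EGraphHom ru.R H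
  po1 : IsEGraphPushout ru.l k m g
  po2 : IsEGraphPushout ru.r k cm f

/-- A narrowing direct derivation `SG ⇛_{ru,m} SH`: a double pushout in E-graphs at an
E-graph match, where `Φ_H := Φ_G ∧ cm_Φ(Φ)` (with `cm` the comatch) is required to be
satisfiable. -/
structure NarrowDerivation (ru : SymbRule N E V LN LE D)
    (SG SH : SymbGraph N E V LN LE D) extends EGraphDerivation ru SG.eg SH.eg where
  formula : ∀ σ : V → D, SH.phi σ ↔ (SG.phi σ ∧ ru.phi (fun x => σ (cm.fD x)))
  sat : ∃ σ : V → D, SH.phi σ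

/-- Parallel independence of two alternative direct derivations: there exist morphisms
`i : L₁ → D₂` and `j : L₂ → D₁` with `m₁ = g₂ ∘ i` and `m₂ = g₁ ∘ j`. -/
def ParallelIndependent {r₁ r₂ : SymbRule N E V LN LE D}
    {SG SH₁ SH₂ : SymbGraph N E V LN LE D}
    (d₁ : SymbDerivation r₁ SG SH₁) (d₂ : SymbDerivation r₂ SG SH₂) : Prop :=
  (∃ i : EGraphHom r₁.L d₂.SD.eg, (d₂.g.comp i).EqOn d₁.m) ∧
  (∃ j : EGraphHom r₂.L d₁.SD.eg, (d₁.g.comp j).EqOn d₂.m)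

/-- Conflict: two alternative direct derivations are a conflict if no direct derivations
`SH₁ ⇒_{r₂} SX₁` and `SH₂ ⇒_{r₁} SX₂` exist with `SX₁` and `SX₂` isomorphic. -/
def Conflict {r₁ r₂ : SymbRule N E V LN LE D}
    {SG SH₁ SH₂ : SymbGraph N E V LN LE D}
    (_ : SymbDerivation r₁ SG SH₁) (_ : SymbDerivation r₂ SG SH₂) : Prop :=
  ¬ ∃ (SX₁ SX₂ : SymbGraph N E V LN LE D)
      (_ : SymbDerivation r₂ SH₁ SX₁) (_ : SymbDerivation r₁ SH₂ SX₂),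
      SymbIso SX₁ SX₂

/-- Direct confluence of two alternative symbolic direct derivations: there exist second
direct derivations `SH₁ ⇒_{r₂,m₂'} SX₁` and `SH₂ ⇒_{r₁,m₁'} SX₂` such that (I) `SX₁` and
`SX₂` are isomorphic, and (II) with `SZ` the pullback of the context span
`SD₁ → SG ← SD₂`, the tracking squares into the context graphs of the second derivations
and into the common result commute. -/
def DirectlyConfluent {r₁ r₂ : SymbRule N E V LN LE D}
    {SG SH₁ SH₂ : SymbGraph N E V LN LE D}
    (d₁ : SymbDerivation r₁ SG SH₁) (d₂ : SymbDerivation r₂ SG SH₂) : Prop :=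
  ∃ (SX₁ SX₂ : SymbGraph N E V LN LE D)
    (e₁ : SymbDerivation r₂ SH₁ SX₁) (e₂ : SymbDerivation r₁ SH₂ SX₂)
    (iso : EGraphHom SX₁.eg SX₂.eg),
    iso.Iso ∧ (∀ σ : V → D, SX₂.phi σ ↔ SX₁.phi (fun x => σ (iso.fD x))) ∧
    ∃ (SZ : SymbGraph N E V LN LE D)
      (z₁ : EGraphHom SZ.eg d₁.SD.eg) (z₂ : EGraphHom SZ.eg d₂.SD.eg),
      IsSymbPullback SZ.phi d₁.SD.phi d₂.SD.phi z₁ z₂ d₁.g d₂.g ∧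
      ∃ (u₁ : EGraphHom SZ.eg e₁.SD.eg) (u₂ : EGraphHom SZ.eg e₂.SD.eg),
        (d₁.f.comp z₁).EqOn (e₁.g.comp u₁) ∧
        (d₂.f.comp z₂).EqOn (e₂.g.comp u₂) ∧
        ((iso.comp e₁.f).comp u₁).EqOn (e₂.f.comp u₂)

/-- A symbolic critical pair: a parallel dependent pair of symbolic direct derivations
on a minimal context `SK` whose formula is equivalent to the conjunction of the
translated rule formulas. -/
structure SymbCriticalPair (r₁ r₂ : SymbRule N E V LN LE D)
    (SK SP₁ SP₂ : SymbGraph N E V LN LE D) where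
  d₁ : SymbDerivation r₁ SK SP₁
  d₂ : SymbDerivation r₂ SK SP₂
  dep : ¬ ParallelIndependent d₁ d₂
  formula : ∀ σ : V → D,
    SK.phi σ ↔ (r₁.phi (fun x => σ (d₁.m.fD x)) ∧ r₂.phi (fun x => σ (d₂.m.fD x)))
  minimal : JointlyOnto d₁.m d₂.m

/-- A conflicting (NCP) pair: a symbolic critical pair for which there do not exist
narrowing direct derivations `SP₁ ⇛_{r₂} SX₁` and `SP₂ ⇛_{r₁} SX₂` making it directly
confluent. -/
def IsNCP {r₁ r₂ : SymbRule N E V LN LE D} {SK SP₁ SP₂ : SymbGraph N E V LN LE D}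
    (cp : SymbCriticalPair r₁ r₂ SK SP₁ SP₂) : Prop :=
  ¬ ∃ (SX₁ SX₂ : SymbGraph N E V LN LE D)
      (e₁ : NarrowDerivation r₂ SP₁ SX₁) (e₂ : NarrowDerivation r₁ SP₂ SX₂)
      (iso : EGraphHom SX₁.eg SX₂.eg),
      iso.Iso ∧ (∀ σ : V → D, SX₂.phi σ ↔ SX₁.phi (fun x => σ (iso.fD x))) ∧
      ∃ (SZ : SymbGraph N E V LN LE D)
        (z₁ : EGraphHom SZ.eg cp.d₁.SD.eg) (z₂ : EGraphHom SZ.eg cp.d₂.SD.eg),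
        IsSymbPullback SZ.phi cp.d₁.SD.phi cp.d₂.SD.phi z₁ z₂ cp.d₁.g cp.d₂.g ∧
        ∃ (u₁ : EGraphHom SZ.eg e₁.Dg) (u₂ : EGraphHom SZ.eg e₂.Dg),
          (cp.d₁.f.comp z₁).EqOn (e₁.g.comp u₁) ∧
          (cp.d₂.f.comp z₂).EqOn (e₂.g.comp u₂) ∧
          ((iso.comp e₁.f).comp u₁).EqOn (e₂.f.comp u₂)

/-- Initial pushout over `t` in E-graphs, with boundary `b : B → Y`, `a : B → C` and
context `c : C → X`: a pushout with `b, c ∈ M` that factors uniquely (via M-morphisms)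
through every other such pushout over `t`. -/
structure IsEGraphInitialPushout {B C Y X : EGraph N E V LN LE}
    (t : EGraphHom Y X) (b : EGraphHom B Y) (a : EGraphHom B C)
    (c : EGraphHom C X) : Prop where
  po : IsEGraphPushout b a t c
  bM : b.MClass
  cM : c.MClass
  init : ∀ (B' C' : EGraph N E V LN LE) (b' : EGraphHom B' Y) (a' : EGraphHom B' C')
      (c' : EGraphHom C' X), b'.MClass → c'.MClass → IsEGraphPushout b' a' t c' →
      ∃ (bs : EGraphHom B B') (cs : EGraphHom C C'),
        bs.MClass ∧ cs.MClass ∧ (b'.comp bs).EqOn b ∧ (c'.comp cs).EqOn c ∧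
        (a'.comp bs).EqOn (cs.comp a) ∧
        ∀ (bs' : EGraphHom B B') (cs' : EGraphHom C C'),
          (b'.comp bs').EqOn b → (c'.comp cs').EqOn c → bs.EqOn bs' ∧ cs.EqOn cs'

/-- Initial pushout over `t` in symbolic graphs: `b, c ∈ M`, an initial pushout in
E-graphs, and `D ⊨ Φ_B ⇔ Φ_Y` and `D ⊨ Φ_C ⇔ Φ_X`. -/
structure IsSymbInitialPushout (SB SC SY SX : SymbGraph N E V LN LE D)
    (t : EGraphHom SY.eg SX.eg) (b : EGraphHom SB.eg SY.eg)
    (a : EGraphHom SB.eg SC.eg) (c : EGraphHom SC.eg SX.eg) : Prop where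
  ipo : IsEGraphInitialPushout t b a c
  phiB : ∀ σ : V → D, SB.phi σ ↔ SY.phi σ
  phiC : ∀ σ : V → D, SC.phi σ ↔ SX.phi σ

end SGT

namespace SGT

/-- In the final step of the completeness proof, square (1a) is a pushout in
symbolic graphs: suppose (2a) is an initial pushout in symbolic graphs (over
`g : SP₁ → SH₁`, with boundary `b : SB → SP₁`, `a : SB → SC` and context `c : SC → SH₁`),
(1a) is a pushout in E-graphs, `SY₁` with `Φ_{Y₁} := Φ_{P₁} ∧ co'₂_Φ(Φ₂)` is the result
of a narrowing direct derivation `SP₁ ⇛_{r₂,o₂'} SY₁`, there exists a symbolic direct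
derivation `SH₁ ⇒_{r₂,m₂'} SX₁` with symbolic comatch `cm'₂` and `Φ_{H₁} ⇔ Φ_{X₁}`,
`g` is a symbolic graph morphism with `g_Φ = p_Φ` (`p : Y₁ → X₁` the E-graph morphism of
(1a)) and `p_Φ ∘ co'₂_Φ = cm'₂_Φ`, and `c₁`, `c'₁` are M-morphisms with
`c'₁_Φ(c₁_Φ(Φ_C)) ⇔ Φ_{X₁}`. Then
`D ⊨ Φ_{X₁} ⇔ p_Φ(Φ_{Y₁}) ∧ c'₁_Φ(c₁_Φ(Φ_C))`, i.e., (1a) is a pushout in symbolic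
graphs. -/
theorem square_1a_is_symbolic_pushout
    {N E V LN LE D : Type*}
    (r₂ : SymbRule N E V LN LE D)
    (SP₁ SH₁ SX₁ SY₁ SB SC : SymbGraph N E V LN LE D)
    (W₁ W₂ : EGraph N E V LN LE)
    (g : EGraphHom SP₁.eg SH₁.eg)
    (b : EGraphHom SB.eg SP₁.eg) (a : EGraphHom SB.eg SC.eg)
    (c : EGraphHom SC.eg SH₁.eg)
    (ipo2a : IsSymbInitialPushout SB SC SP₁ SH₁ g b a c)
    (nd : NarrowDerivation r₂ SP₁ SY₁)
    (d' : SymbDerivation r₂ SH₁ SX₁)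
    (hHX : ∀ σ : V → D, SH₁.phi σ ↔ SX₁.phi σ)
    (p : EGraphHom SY₁.eg SX₁.eg)
    (b₁ : EGraphHom SB.eg W₂) (b'₁ : EGraphHom W₂ SY₁.eg)
    (c₁ : EGraphHom SC.eg W₁) (c'₁ : EGraphHom W₁ SX₁.eg)
    (hc₁M : c₁.MClass) (hc'₁M : c'₁.MClass)
    (po1a : IsEGraphPushout (b'₁.comp b₁) a p (c'₁.comp c₁))
    (hg_symb : IsSymbHom SP₁.phi SH₁.phi g)
    (hgp : g.fD = p.fD)
    (hpc : ∀ x ∈ r₂.R.lnodes, p.fD (nd.cm.fD x) = d'.cm.fD x)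
    (hcc : ∀ σ : V → D, SX₁.phi σ ↔ SC.phi (fun x => σ (c'₁.fD (c₁.fD x)))) :
    (∀ σ : V → D,
      SX₁.phi σ ↔ (SY₁.phi (fun x => σ (p.fD x)) ∧ SC.phi (fun x => σ (c'₁.fD (c₁.fD x))))) ∧
    IsSymbPushout SY₁.phi SC.phi SX₁.phi (b'₁.comp b₁) a p (c'₁.comp c₁) := by
  have key : ∀ σ : V → D,
      SX₁.phi σ ↔ (SY₁.phi (fun x => σ (p.fD x)) ∧ SC.phi (fun x => σ (c'₁.fD (c₁.fD x)))) := by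
    intro σ
    constructor
    · intro hX
      refine ⟨?_, (hcc σ).mp hX⟩
      rw [nd.formula]
      constructor
      · have hP : SP₁.phi (fun x => σ (g.fD x)) :=
          hg_symb σ ((hHX σ).mpr hX)
        simpa [hgp] using hP
      · have hr : r₂.phi (fun x => σ (d'.cm.fD x)) := d'.cm_symb σ hX
        refine r₂.respects _ _ (fun x hx => ?_) hr
        rw [hpc x (by rwa [r₂.lnodesR])]
    · intro ⟨_, hC⟩
      exact (hcc σ).mpr hC
  exact ⟨key, ⟨po1a, key⟩⟩

end SGT
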